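/- Let k be an algebraically closed field of characteristic p > 2, n = p^s·t with s ≥ 1 and p ∤ t, and μ ∈ k. Then every simple left H(0,μ)-module is one-dimensional over k. -/

import Mathlib

/-!
Since `ga = ag` and `ba = a(b + a/2)`, the subspace `aM` of a simple module `M` is a submodule;
as `a` is nilpotent it is not all of `M`, so `a` acts by zero. Then `g` and `b` commute on `M`.
The operator `g` is killed by `X^n - 1`, and `b^p` acts on each eigenspace `g = α` by the scalar
`μ(1 - α^p)`, so over the algebraically closed field `k` they have a common eigenvector `u`.
The line `k u` is then a submodule, hence all of `M`.
-/

open FreeAlgebra in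
/-- The defining relations of the Hopf algebra `H(λ,μ)` of Cibils–Lauve–Witherspoon, on the
free algebra on three generators `g = ι 0`, `a = ι 1`, `b = ι 2`:
`g^n = 1`, `ag = ga`, `bg = ga + gb`, `a^p = λ(1-g^p)`, `b^p = μ(1-g^p)`,
`ba = ab + (1/2)a²`. -/
inductive HRel (k : Type*) [Field k] (n p : ℕ) (lam mu : k) :
    FreeAlgebra k (Fin 3) → FreeAlgebra k (Fin 3) → Prop
  | gn : HRel k n p lam mu (ι k (0 : Fin 3) ^ n) 1
  | ag : HRel k n p lam mu (ι k (1 : Fin 3) * ι k (0 : Fin 3)) (ι k (0 : Fin 3) * ι k (1 : Fin 3))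
  | bg : HRel k n p lam mu (ι k (2 : Fin 3) * ι k (0 : Fin 3))
      (ι k (0 : Fin 3) * ι k (1 : Fin 3) + ι k (0 : Fin 3) * ι k (2 : Fin 3))
  | ap : HRel k n p lam mu (ι k (1 : Fin 3) ^ p)
      (algebraMap k (FreeAlgebra k (Fin 3)) lam * (1 - ι k (0 : Fin 3) ^ p))
  | bp : HRel k n p lam mu (ι k (2 : Fin 3) ^ p)
      (algebraMap k (FreeAlgebra k (Fin 3)) mu * (1 - ι k (0 : Fin 3) ^ p))
  | ba : HRel k n p lam mu (ι k (2 : Fin 3) * ι k (1 : Fin 3))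
      (ι k (1 : Fin 3) * ι k (2 : Fin 3)
        + algebraMap k (FreeAlgebra k (Fin 3)) (1 / 2) * ι k (1 : Fin 3) ^ 2)

/-- The algebra `H(λ,μ)`: the quotient of the free algebra on `g, a, b` by the two-sided
ideal generated by the relations `HRel`. -/
abbrev HAlg (k : Type*) [Field k] (n p : ℕ) (lam mu : k) := RingQuot (HRel k n p lam mu)

/-- The image of the generator `g` in `H(λ,μ)`. -/
noncomputable def Hg (k : Type*) [Field k] (n p : ℕ) (lam mu : k) : HAlg k n p lam mu :=
  RingQuot.mkAlgHom k (HRel k n p lam mu) (FreeAlgebra.ι k (0 : Fin 3))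

/-- The image of the generator `a` in `H(λ,μ)`. -/
noncomputable def Ha (k : Type*) [Field k] (n p : ℕ) (lam mu : k) : HAlg k n p lam mu :=
  RingQuot.mkAlgHom k (HRel k n p lam mu) (FreeAlgebra.ι k (1 : Fin 3))

/-- The image of the generator `b` in `H(λ,μ)`. -/
noncomputable def Hb (k : Type*) [Field k] (n p : ℕ) (lam mu : k) : HAlg k n p lam mu :=
  RingQuot.mkAlgHom k (HRel k n p lam mu) (FreeAlgebra.ι k (2 : Fin 3))

open Polynomial

namespace Module.End

variable {K V : Type*} [Field K] [IsAlgClosed K] [AddCommGroup V] [Module K V]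

theorem exists_hasEigenvector_aeval_of_aeval_apply_eq_zero (f : End K V) {q : K[X]} (hq : q ≠ 0)
    {v : V} (hv : v ≠ 0) (h : aeval f q v = 0) :
    ∃ (α : K) (r : K[X]), f.HasEigenvector α (aeval f r v) := by
  induction hd : q.natDegree using Nat.strong_induction_on generalizing q with
  | _ d ih =>
  by_cases hd0 : q.natDegree = 0
  · have hc : q.coeff 0 ≠ 0 := fun h0 => hq (by rw [eq_C_of_natDegree_eq_zero hd0, h0, C_0])
    rw [eq_C_of_natDegree_eq_zero hd0, aeval_C, algebraMap_end_apply] at h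
    exact absurd ((smul_eq_zero.mp h).resolve_right hv) hc
  obtain ⟨α, hα⟩ :=
    IsAlgClosed.exists_root q fun h0 => hd0 (natDegree_eq_of_degree_eq_some h0)
  have hfac : (X - C α) * (q /ₘ (X - C α)) = q := mul_divByMonic_eq_iff_isRoot.mpr hα
  by_cases hw : aeval f (q /ₘ (X - C α)) v = 0
  · refine ih _ ?_ (fun h0 => hq ?_) hw rfl
    · rw [natDegree_divByMonic _ (monic_X_sub_C α), natDegree_X_sub_C]
      omega
    · rw [← hfac, h0, mul_zero]
  · refine ⟨α, _, mem_eigenspace_iff.mpr (sub_eq_zero.mp ?_), hw⟩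
    rw [← hfac, map_mul, mul_apply, map_sub, aeval_X, aeval_C, LinearMap.sub_apply] at h
    simpa [algebraMap_end_apply] using h

theorem exists_hasEigenvector_of_commute {f g : End K V} (hfg : Commute f g) {α : K} {w : V}
    (hw : f.HasEigenvector α w) {q : K[X]} (hq : q ≠ 0) (hgq : aeval g q w = 0) :
    ∃ (β : K) (u : V), f.HasEigenvector α u ∧ g.HasEigenvector β u := by
  obtain ⟨β, r, hu⟩ := exists_hasEigenvector_aeval_of_aeval_apply_eq_zero g hq hw.2 hgq
  have hcomm : Commute f (aeval g r) :=
    Algebra.commute_of_mem_adjoin_singleton_of_commute (aeval_mem_adjoin_singleton K g) hfg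
  refine ⟨β, _, ⟨mem_eigenspace_iff.mpr ?_, hu.2⟩, hu⟩
  rw [← mul_apply, hcomm.eq, mul_apply, hw.apply_eq_smul, map_smul]

end Module.End

section SimpleModule

variable {k A M : Type*} [Field k] [Ring A] [Algebra k A] [AddCommGroup M] [Module k M]
  [Module A M] [IsScalarTower k A M] [IsSimpleModule A M]

theorem Submodule.eq_bot_or_eq_top_of_forall_smul_mem {s : Set A} (hs : Algebra.adjoin k s = ⊤)
    (N : Submodule k M) (hN : ∀ x ∈ s, ∀ m ∈ N, x • m ∈ N) : N = ⊥ ∨ N = ⊤ := by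
  have hall : ∀ x : A, ∀ m ∈ N, x • m ∈ N := by
    intro x
    have hx : x ∈ Algebra.adjoin k s := hs ▸ Algebra.mem_top
    induction hx using Algebra.adjoin_induction with
    | mem x hx => exact hN x hx
    | algebraMap r => exact fun m hm => by rw [algebraMap_smul]; exact N.smul_mem r hm
    | add x y _ _ hx hy => exact fun m hm => by rw [add_smul]; exact N.add_mem (hx m hm) (hy m hm)
    | mul x y _ _ hx hy => exact fun m hm => by rw [mul_smul]; exact hx _ (hy m hm)
  let N' : Submodule A M := { N with smul_mem' := fun x m hm => hall x m hm }
  have hN' : N'.restrictScalars k = N := rfl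
  rcases IsSimpleOrder.eq_bot_or_eq_top N' with h | h
  · exact .inl (by rw [← hN', h, Submodule.restrictScalars_bot])
  · exact .inr (by rw [← hN', h, Submodule.restrictScalars_top])

theorem smul_eq_zero_of_isNilpotent_of_forall_mul_eq {s : Set A} (hs : Algebra.adjoin k s = ⊤)
    {x : A} (hx : IsNilpotent x) (hxs : ∀ y ∈ s, ∃ z, y * x = x * z) (m : M) :
    x • m = 0 := by
  let X := Algebra.lsmul k k M x
  have hstable : ∀ y ∈ s, ∀ m ∈ LinearMap.range X, y • m ∈ LinearMap.range X := by
    rintro y hy _ ⟨m, rfl⟩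
    obtain ⟨z, hz⟩ := hxs y hy
    exact ⟨z • m, by simp only [X, Algebra.lsmul_apply, ← mul_smul, hz]⟩
  rcases Submodule.eq_bot_or_eq_top_of_forall_smul_mem hs _ hstable with h | h
  · exact LinearMap.congr_fun (LinearMap.range_eq_bot.mp h) m
  · obtain ⟨d, hd⟩ := hx
    have hsurj : Function.Surjective ⇑(X ^ d) := by
      rw [Module.End.coe_pow]; exact (LinearMap.range_eq_top.mp h).iterate d
    have hXd : X ^ d = 0 := by rw [← map_pow, hd, map_zero]
    have := IsSimpleModule.nontrivial A M
    obtain ⟨m', hm'⟩ := exists_ne (0 : M)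
    obtain ⟨m'', hm''⟩ := hsurj m'
    exact absurd (by simpa [hXd] using hm''.symm) hm'

theorem rank_eq_one_of_forall_smul_eq_smul {s : Set A} (hs : Algebra.adjoin k s = ⊤) {u : M}
    (hu : u ≠ 0) (hsu : ∀ x ∈ s, ∃ c : k, x • u = c • u) : Module.rank k M = 1 := by
  have hline : ∀ x ∈ s, ∀ m ∈ k ∙ u, x • m ∈ k ∙ u := by
    intro x hx m hm
    obtain ⟨d, rfl⟩ := Submodule.mem_span_singleton.mp hm
    obtain ⟨c, hc⟩ := hsu x hx
    rw [smul_comm, hc, smul_smul]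
    exact Submodule.smul_mem _ _ (Submodule.mem_span_singleton_self u)
  have htop := (Submodule.eq_bot_or_eq_top_of_forall_smul_mem hs _ hline).resolve_left
    (by simpa using hu)
  exact rank_eq_one u hu fun m => Submodule.mem_span_singleton.mp (htop ▸ Submodule.mem_top)

end SimpleModule

section Relations

variable {k : Type*} [Field k] {n p : ℕ} {lam mu : k}

theorem Hg_pow_eq_one : Hg k n p lam mu ^ n = 1 := by
  simpa [Hg, Ha, Hb] using RingQuot.mkAlgHom_rel k (HRel.gn : HRel k n p lam mu _ _)

theorem Ha_mul_Hg : Ha k n p lam mu * Hg k n p lam mu = Hg k n p lam mu * Ha k n p lam mu := by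
  simpa [Hg, Ha, Hb] using RingQuot.mkAlgHom_rel k (HRel.ag : HRel k n p lam mu _ _)

theorem Hb_mul_Hg :
    Hb k n p lam mu * Hg k n p lam mu =
      Hg k n p lam mu * Ha k n p lam mu + Hg k n p lam mu * Hb k n p lam mu := by
  simpa [Hg, Ha, Hb] using RingQuot.mkAlgHom_rel k (HRel.bg : HRel k n p lam mu _ _)

theorem Ha_pow : Ha k n p lam mu ^ p = algebraMap k _ lam * (1 - Hg k n p lam mu ^ p) := by
  simpa [Hg, Ha, Hb] using RingQuot.mkAlgHom_rel k (HRel.ap : HRel k n p lam mu _ _)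

theorem Hb_pow : Hb k n p lam mu ^ p = algebraMap k _ mu * (1 - Hg k n p lam mu ^ p) := by
  simpa [Hg, Ha, Hb] using RingQuot.mkAlgHom_rel k (HRel.bp : HRel k n p lam mu _ _)

theorem Hb_mul_Ha :
    Hb k n p lam mu * Ha k n p lam mu =
      Ha k n p lam mu * (Hb k n p lam mu + algebraMap k _ (1 / 2) * Ha k n p lam mu) := by
  have h := RingQuot.mkAlgHom_rel k (HRel.ba : HRel k n p lam mu _ _)
  simp only [map_mul, map_add, map_pow, AlgHom.commutes] at h
  rw [Ha, Hb, h, mul_add, sq, ← mul_assoc, ← mul_assoc, Algebra.commutes]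

theorem adjoin_Hg_Ha_Hb :
    Algebra.adjoin k {Hg k n p lam mu, Ha k n p lam mu, Hb k n p lam mu} = ⊤ := by
  have h := congrArg (Subalgebra.map (RingQuot.mkAlgHom k (HRel k n p lam mu)))
    (FreeAlgebra.adjoin_range_ι k (Fin 3))
  rw [← Algebra.adjoin_image, Algebra.map_top, (AlgHom.range_eq_top _).mpr
    (RingQuot.mkAlgHom_surjective k _), ← Set.range_comp] at h
  convert h
  ext x
  simp [Fin.exists_fin_succ, Hg, Ha, Hb, eq_comm]

end Relations

section HModule

variable {k : Type*} [Field k] {n p : ℕ} {mu : k} {M : Type*} [AddCommGroup M] [Module k M]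
  [Module (HAlg k n p 0 mu) M] [IsScalarTower k (HAlg k n p 0 mu) M]
  [IsSimpleModule (HAlg k n p 0 mu) M]

theorem Ha_smul_eq_zero (m : M) : Ha k n p 0 mu • m = 0 := by
  refine smul_eq_zero_of_isNilpotent_of_forall_mul_eq (k := k) adjoin_Hg_Ha_Hb
    ⟨p, by simp [Ha_pow]⟩ ?_ m
  rintro y (rfl | rfl | rfl)
  · exact ⟨_, Ha_mul_Hg.symm⟩
  · exact ⟨_, rfl⟩
  · exact ⟨_, Hb_mul_Ha⟩

theorem Hb_smul_Hg_smul (m : M) :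
    Hb k n p 0 mu • Hg k n p 0 mu • m = Hg k n p 0 mu • Hb k n p 0 mu • m := by
  rw [← mul_smul, Hb_mul_Hg, add_smul, mul_smul, mul_smul, Ha_smul_eq_zero, smul_zero, zero_add]

theorem exists_common_eigenvector_Hg_Hb [IsAlgClosed k] (hn : 0 < n) (hp : 0 < p) :
    ∃ (α β : k) (u : M),
      u ≠ 0 ∧ Hg k n p 0 mu • u = α • u ∧ Hb k n p 0 mu • u = β • u := by
  have := IsSimpleModule.nontrivial (HAlg k n p 0 mu) M
  set G := Algebra.lsmul k k M (Hg k n p 0 mu)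
  set B := Algebra.lsmul k k M (Hb k n p 0 mu)
  have hGB : Commute G B := LinearMap.ext fun m => (Hb_smul_Hg_smul m).symm
  obtain ⟨v, hv⟩ := exists_ne (0 : M)
  have hGv : aeval G (X ^ n - C 1 : k[X]) v = 0 := by
    rw [map_sub, aeval_X_pow, ← map_pow, Hg_pow_eq_one, aeval_C, map_one, map_one, sub_self,
      LinearMap.zero_apply]
  obtain ⟨α, r, hw⟩ := Module.End.exists_hasEigenvector_aeval_of_aeval_apply_eq_zero G
    (X_pow_sub_C_ne_zero hn 1) hv hGv
  set w := aeval G r v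
  have hBw : aeval B (X ^ p - C (mu * (1 - α ^ p)) : k[X]) w = 0 := by
    have hgw : Hg k n p 0 mu ^ p • w = α ^ p • w := by
      rw [← Algebra.lsmul_apply (R := k) (B := k), map_pow, hw.pow_apply]
    rw [map_sub, aeval_X_pow, aeval_C, LinearMap.sub_apply, Module.algebraMap_end_apply,
      ← map_pow, Algebra.lsmul_apply, Hb_pow, mul_smul, algebraMap_smul, sub_smul, one_smul, hgw]
    module
  obtain ⟨β, u, hGu, hBu⟩ := Module.End.exists_hasEigenvector_of_commute hGB hw
    (X_pow_sub_C_ne_zero hp _) hBw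
  exact ⟨α, β, u, hGu.2, hGu.apply_eq_smul, hBu.apply_eq_smul⟩

end HModule

theorem stmt11_general {k : Type*} [Field k] [IsAlgClosed k] (p : ℕ) (hp : 2 < p)
    (s t : ℕ) (hpt : ¬ p ∣ t) (mu : k)
    (M : Type) [AddCommGroup M] [Module k M]
    [Module (HAlg k (p ^ s * t) p 0 mu) M]
    [IsScalarTower k (HAlg k (p ^ s * t) p 0 mu) M]
    (hM : IsSimpleModule (HAlg k (p ^ s * t) p 0 mu) M) :
    Module.rank k M = 1 := by
  have ht : 0 < t := Nat.pos_of_ne_zero fun h => hpt (h ▸ dvd_zero p)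
  obtain ⟨α, β, u, hu, hgu, hbu⟩ :=
    exists_common_eigenvector_Hg_Hb (n := p ^ s * t) (p := p) (mu := mu) (M := M) (by positivity)
      (by omega)
  refine rank_eq_one_of_forall_smul_eq_smul (A := HAlg k (p ^ s * t) p 0 mu) adjoin_Hg_Ha_Hb hu ?_
  rintro x (rfl | rfl | rfl)
  · exact ⟨α, hgu⟩
  · exact ⟨0, by rw [zero_smul]; exact Ha_smul_eq_zero u⟩
  · exact ⟨β, hbu⟩

/-- For `k` algebraically closed of characteristic `p > 2` and
`n = p^s·t` with `s ≥ 1`, `p ∤ t`, every simple left `H(0,μ)`-module is one-dimensional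
over `k`. -/
theorem stmt11 {k : Type*} [Field k] [IsAlgClosed k] (p : ℕ) [CharP k p] (hp : 2 < p)
    (s t : ℕ) (hs : 1 ≤ s) (hpt : ¬ p ∣ t) (mu : k)
    (M : Type) [AddCommGroup M] [Module k M]
    [Module (HAlg k (p ^ s * t) p 0 mu) M]
    [IsScalarTower k (HAlg k (p ^ s * t) p 0 mu) M]
    (hM : IsSimpleModule (HAlg k (p ^ s * t) p 0 mu) M) :
    Module.rank k M = 1 :=
  stmt11_general p hp s t hpt mu M hM
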